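/- arXiv:1703.00640 — 5 statements merged into one kernel-verified Lean document; each statement's English description precedes it below -/
import Mathlib

section
/- Let W(X) be a polynomial with integer coefficients of degree at most 2N−2, regarded as a polynomial over ℝ, and let L(X) be the remainder on dividing W(X) by A(X) = X^N + 2^{−b} X − 1 (so deg L < N). Then every coefficient of 2^b·L(X) is an integer, L(2^b) is an integer, and L(2^b) ≡ W(2^b) (mod 2^{Nb}). -/
/-!
Write `W = r + X ^ N * q` with `deg r < N`, so `deg q ≤ N - 2`. With `c = 2 ^ (-b)`,
`W = q * A + (r - (c X - 1) q)` and the last summand has degree `< N`, so it is `L`.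
Multiplying by `2 ^ b` turns `c X q` into `X q`, and at `X = 2 ^ b` the factor `c X - 1` vanishes,
so `L(2 ^ b) = r(2 ^ b)`, which differs from `W(2 ^ b)` by a multiple of `(2 ^ b) ^ N`.
-/

open Polynomial

namespace Polynomial

variable {R : Type*} [CommRing R]

theorem modByMonic_X_pow_add_eq {E p : R[X]} {N k : ℕ} (hkN : k < N) (hE : E.natDegree ≤ k)
    (hp : p.natDegree + k < 2 * N) :
    p %ₘ (X ^ N + E) = p %ₘ X ^ N - E * (p /ₘ X ^ N) := by
  nontriviality R
  have hEN : E.degree < N := (degree_le_of_natDegree_le hE).trans_lt (by exact_mod_cast hkN)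
  have hEq : (E * (p /ₘ X ^ N)).natDegree < N := by
    refine natDegree_mul_le.trans_lt ?_
    rw [natDegree_divByMonic _ (monic_X_pow N), natDegree_X_pow]
    omega
  have hXN : (X ^ N + E).degree = (N : WithBot ℕ) := by
    rw [degree_add_eq_left_of_degree_lt (by rwa [degree_X_pow]), degree_X_pow]
  refine (div_modByMonic_unique (p /ₘ X ^ N) _ (monic_X_pow_add hEN) ⟨?_, ?_⟩).2
  · linear_combination modByMonic_add_div p (X ^ N)
  · rw [hXN]
    refine (degree_sub_le _ _).trans_lt (max_lt ?_ (degree_le_natDegree.trans_lt ?_))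
    · simpa using degree_modByMonic_lt p (monic_X_pow N)
    · exact_mod_cast hEq

theorem eval_pow_dvd_eval_sub_eval_modByMonic_X_pow (p : R[X]) (N : ℕ) (a : R) :
    a ^ N ∣ p.eval a - (p %ₘ X ^ N).eval a := by
  simpa using eval_dvd (x := a) ((dvd_modByMonic_sub p (X ^ N)).neg_right)

section Inverse

variable {S : Type*} [CommRing S] (f : R →+* S) {a : R} {c : S} (r q : R[X])

theorem C_mul_map_sub_C_mul_X_sub_one_mul_map (hac : f a * c = 1) :
    C (f a) * (r.map f - (C c * X - 1) * q.map f) = (C a * (r + q) - X * q).map f := by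
  have hC : C (f a) * C c = 1 := by rw [← C_mul, hac, C_1]
  simp only [Polynomial.map_sub, Polynomial.map_mul, Polynomial.map_add, map_C, map_X]
  linear_combination (-(X * q.map f)) * hC

theorem eval_map_sub_C_mul_X_sub_one_mul_map (hac : f a * c = 1) :
    (r.map f - (C c * X - 1) * q.map f).eval (f a) = f (r.eval a) := by
  simp only [eval_sub, eval_mul, eval_C, eval_X, eval_one, eval_map_apply]
  linear_combination (-f (q.eval a)) * hac

end Inverse

end Polynomial

theorem low_product_cancellation_general (b N : ℕ) (hN : 3 ≤ N)
    (W : Polynomial ℤ) (hW : W.natDegree ≤ 2 * N - 2)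
    (L : Polynomial ℝ)
    (hL : L = (W.map (Int.castRingHom ℝ)) %ₘ (X ^ N + C ((2:ℝ) ^ (-(b:ℤ))) * X - 1)) :
    (∀ i : ℕ, ∃ m : ℤ, (2:ℝ) ^ b * L.coeff i = (m : ℝ)) ∧
    ∃ m : ℤ, L.eval ((2:ℝ) ^ b) = (m : ℝ) ∧ m ≡ W.eval (2 ^ b) [ZMOD (2:ℤ) ^ (N * b)] := by
  set f := Int.castRingHom ℝ
  set c : ℝ := (2:ℝ) ^ (-(b:ℤ))
  have hfa : f (2 ^ b) = (2:ℝ) ^ b := by simp [f]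
  have hac : f (2 ^ b) * c = 1 := by simp [f, c]
  have hWr : (W.map f).natDegree + 1 < 2 * N := by
    have := natDegree_map_le (f := f) (p := W)
    omega
  have hL' : L = (W %ₘ X ^ N).map f - (C c * X - 1) * (W /ₘ X ^ N).map f := by
    rw [hL, add_sub_assoc, modByMonic_X_pow_add_eq (by omega) (by compute_degree) hWr,
      map_modByMonic _ (monic_X_pow N), map_divByMonic _ (monic_X_pow N), Polynomial.map_pow, map_X]
  refine ⟨fun i ↦ ⟨(C (2 ^ b) * (W %ₘ X ^ N + W /ₘ X ^ N) - X * (W /ₘ X ^ N)).coeff i, ?_⟩,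
    (W %ₘ X ^ N).eval (2 ^ b), ?_, ?_⟩
  · rw [← hfa, ← coeff_C_mul, hL', C_mul_map_sub_C_mul_X_sub_one_mul_map f _ _ hac, coeff_map]
    rfl
  · rw [← hfa, hL', eval_map_sub_C_mul_X_sub_one_mul_map f _ _ hac]
    rfl
  · rw [pow_mul']
    exact Int.modEq_iff_dvd.2 (eval_pow_dvd_eval_sub_eval_modByMonic_X_pow W N (2 ^ b))

/-- cancellation trick for the low product.
`A(X) = X^N + 2^(-b) X - 1`, `L` is the remainder of `W` (viewed over `ℝ`) modulo `A`.
Then all coefficients of `2^b * L` are integers, `L(2^b)` is an integer, and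
`L(2^b) ≡ W(2^b) (mod 2^(N*b))`. -/
theorem low_product_cancellation (b N : ℕ) (hb : 4 ≤ b) (hN : 3 ≤ N)
    (W : Polynomial ℤ) (hW : W.natDegree ≤ 2 * N - 2)
    (L : Polynomial ℝ)
    (hL : L = (W.map (Int.castRingHom ℝ)) %ₘ (X ^ N + C ((2:ℝ) ^ (-(b:ℤ))) * X - 1)) :
    (∀ i : ℕ, ∃ m : ℤ, (2:ℝ) ^ b * L.coeff i = (m : ℝ)) ∧
    ∃ m : ℤ, L.eval ((2:ℝ) ^ b) = (m : ℝ) ∧ m ≡ W.eval (2 ^ b) [ZMOD (2:ℤ) ^ (N * b)] :=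
  low_product_cancellation_general b N hN W hW L hL
end

section
/- For every integer k ≥ 0 and every z ∈ ℂ with |z| < 2, the series α(z) := ∑_{r=0}^∞ α_{r,1} z^{r+1} converges and satisfies α(z)^k = ∑_{r=0}^∞ α_{r,k} z^{k+r}, where the series on the right also converges. -/
/-- Generalized binomial coefficient `C(x, r) = x (x-1) ⋯ (x-r+1) / r!`. -/
noncomputable def gbc (x : ℝ) (r : ℕ) : ℝ :=
  (∏ j ∈ Finset.range r, (x - j)) / (r.factorial : ℝ)

/-- The coefficients `α_{r,k}` of `α(z)^k`: `α_{0,k} = 1` and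
`α_{r,k} = (k/(rN)) C((k+r)/N - 1, r-1) (-2^(-b))^r` for `r ≥ 1`. -/
noncomputable def alphaC (b N r k : ℕ) : ℝ :=
  if r = 0 then 1
  else ((k : ℝ) / (r * N)) * gbc (((k : ℝ) + r) / N - 1) (r - 1) * (-(2:ℝ) ^ (-(b:ℤ))) ^ r

/-!
With `c = -2^(-b)` one has `α_{r,k} = A_r(k/N) c^r`, where `A_n(x) = x/n · C(x + n/N - 1, n - 1)`
(`A_0 = 1`) are Rothe–Hagen coefficients with step `w = 1/N`. They satisfy the convolution identity
`∑_{i+j=n} A_i(x) A_j(y) = A_n(x + y)`, so the coefficient sequences satisfy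
`α_{·,k} ⋆ α_{·,l} = α_{·,k+l}`. The identity is proved by induction on `n`: the difference of the
two sides is a polynomial in `x` which vanishes at `0` and, by the recursion
`A_{n+1}(x + 1) - A_{n+1}(x) = A_n(x + w)`, is `1`-periodic, hence zero.

The crude bound `|α_{r,k}| ≤ (k+1) e^k (e²/2^b)^r` makes all series absolutely convergent for
`|z| < 2` when `b ≥ 4`, and the Cauchy product then gives `α(z)^k` by induction on `k`.
-/

open Finset Polynomial
open scoped Nat

theorem Polynomial.eq_zero_of_periodic {R : Type*} [CommRing R] [IsDomain R] [CharZero R]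
    {p : R[X]} (hp : Function.Periodic p.eval 1) (h0 : p.eval 0 = 0) : p = 0 := by
  refine p.eq_zero_of_infinite_isRoot
    (Set.infinite_of_injective_forall_mem Nat.cast_injective fun m : ℕ => ?_)
  induction m with
  | zero => simpa using h0
  | succ m ih => simpa [hp (m : R)] using ih

lemma gbc_eq_eval_descPochhammer (u : ℝ) (m : ℕ) :
    gbc u m = (descPochhammer ℝ m).eval u / m ! := by
  rw [gbc, descPochhammer_eval_eq_prod_range]

lemma eval_descPochhammer_succ (u : ℝ) (m : ℕ) :
    (descPochhammer ℝ (m + 1)).eval u = u * (descPochhammer ℝ m).eval (u - 1) := by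
  simp [descPochhammer_succ_left]

/-- `(rothePoly w n).eval x = x / n * C(x + n w - 1, n - 1)` for `n ≥ 1`. -/
noncomputable def rothePoly (w : ℝ) : ℕ → ℝ[X]
  | 0 => 1
  | n + 1 => C ((n + 1)! : ℝ)⁻¹ * X * (descPochhammer ℝ n).comp (X + C ((n + 1) * w - 1))

section Rothe

variable (w : ℝ)

@[simp] lemma rothePoly_zero : rothePoly w 0 = 1 := rfl

lemma rothePoly_eval_zero {n : ℕ} (hn : n ≠ 0) : (rothePoly w n).eval 0 = 0 := by
  obtain ⟨n, rfl⟩ := Nat.exists_eq_succ_of_ne_zero hn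
  simp [rothePoly]

lemma rothePoly_eval_add_one_sub_eval (n : ℕ) (x : ℝ) :
    (rothePoly w (n + 1)).eval (x + 1) - (rothePoly w (n + 1)).eval x =
      (rothePoly w n).eval (x + w) := by
  cases n with
  | zero => simp [rothePoly]
  | succ m =>
    simp only [rothePoly, eval_mul, eval_C, eval_X, eval_comp, eval_add]
    rw [eval_descPochhammer_succ, descPochhammer_succ_eval]
    have e₁ : x + 1 + ((↑(m + 1) + 1) * w - 1) - 1 = x + ((↑(m + 1) + 1) * w - 1) := by ring
    have e₂ : x + w + ((↑m + 1) * w - 1) = x + ((↑(m + 1) + 1) * w - 1) := by push_cast; ring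
    rw [e₁, e₂]
    generalize (descPochhammer ℝ m).eval _ = q
    simp only [Nat.factorial_succ]
    push_cast
    field_simp
    ring

theorem sum_antidiagonal_rothePoly_eval (n : ℕ) (x y : ℝ) :
    ∑ p ∈ antidiagonal n, (rothePoly w p.1).eval x * (rothePoly w p.2).eval y =
      (rothePoly w n).eval (x + y) := by
  induction n generalizing x with
  | zero => simp [rothePoly]
  | succ n ih =>
    let D : ℝ[X] := ∑ p ∈ antidiagonal (n + 1), rothePoly w p.1 * C ((rothePoly w p.2).eval y) -
      (rothePoly w (n + 1)).comp (X + C y)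
    have eval_D (t : ℝ) : D.eval t =
        ∑ p ∈ antidiagonal (n + 1), (rothePoly w p.1).eval t * (rothePoly w p.2).eval y -
          (rothePoly w (n + 1)).eval (t + y) := by
      simp [D, eval_finsetSum]
    have periodic : Function.Periodic D.eval 1 := by
      intro t
      have hsum :
          ∑ p ∈ antidiagonal (n + 1), (rothePoly w p.1).eval (t + 1) * (rothePoly w p.2).eval y -
            ∑ p ∈ antidiagonal (n + 1), (rothePoly w p.1).eval t * (rothePoly w p.2).eval y =
          (rothePoly w n).eval (t + y + w) := by
        rw [← sum_sub_distrib, Nat.sum_antidiagonal_succ, add_right_comm, ← ih]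
        simp only [rothePoly_zero, eval_one, sub_self, zero_add, ← sub_mul,
          rothePoly_eval_add_one_sub_eval]
      have hrhs := rothePoly_eval_add_one_sub_eval w n (t + y)
      rw [add_right_comm] at hrhs
      show D.eval (t + 1) = D.eval t
      rw [eval_D, eval_D]
      linarith
    have hD : D = 0 := eq_zero_of_periodic periodic (by
      rw [eval_D, Nat.sum_antidiagonal_succ, sum_eq_zero fun p _ =>
        by rw [rothePoly_eval_zero w p.1.succ_ne_zero, zero_mul]]
      simp [rothePoly])
    simpa [hD, sub_eq_zero] using (eval_D x).symm

end Rothe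

lemma alphaC_eq_rothePoly_eval (b N r k : ℕ) :
    alphaC b N r k = (rothePoly (1 / N) r).eval ((k : ℝ) / N) * (-(2 : ℝ) ^ (-(b : ℤ))) ^ r := by
  cases r with
  | zero => simp [alphaC]
  | succ m =>
    simp only [alphaC, rothePoly, Nat.succ_ne_zero, if_false, Nat.add_sub_cancel, eval_mul,
      eval_C, eval_X, eval_comp, eval_add, gbc_eq_eval_descPochhammer, Nat.factorial_succ]
    push_cast
    simp only [div_eq_mul_inv, mul_inv]
    ring_nf

theorem sum_antidiagonal_alphaC_mul (b N k l n : ℕ) :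
    ∑ p ∈ antidiagonal n, alphaC b N p.1 k * alphaC b N p.2 l = alphaC b N n (k + l) := by
  have hterm (p : ℕ × ℕ) (hp : p ∈ antidiagonal n) : alphaC b N p.1 k * alphaC b N p.2 l =
      (rothePoly (1 / N) p.1).eval ((k : ℝ) / N) * (rothePoly (1 / N) p.2).eval ((l : ℝ) / N) *
        (-(2 : ℝ) ^ (-(b : ℤ))) ^ n := by
    rw [alphaC_eq_rothePoly_eval, alphaC_eq_rothePoly_eval, mul_mul_mul_comm, ← pow_add,
      mem_antidiagonal.mp hp]
  rw [sum_congr rfl hterm, ← sum_mul, sum_antidiagonal_rothePoly_eval, alphaC_eq_rothePoly_eval,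
    ← add_div, Nat.cast_add]

lemma alphaC_zero_right (b N r : ℕ) : alphaC b N r 0 = if r = 0 then 1 else 0 := by
  simp [alphaC]

lemma abs_gbc_le_exp (u : ℝ) (m : ℕ) : |gbc u m| ≤ Real.exp (|u| + m) := by
  have hprod : |∏ j ∈ range m, (u - j)| ≤ (|u| + m) ^ m := by
    rw [abs_prod]
    calc ∏ j ∈ range m, |u - j| ≤ ∏ _j ∈ range m, (|u| + m) := by
          gcongr with j hj
          calc |u - j| ≤ |u| + |(j : ℝ)| := abs_sub _ _
            _ ≤ |u| + m := by
              rw [Nat.abs_cast]; gcongr; exact (mem_range.mp hj).le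
      _ = (|u| + m) ^ m := by rw [prod_const, card_range]
  calc |gbc u m| ≤ (|u| + m) ^ m / m ! := by
        rw [gbc, abs_div, Nat.abs_cast]; gcongr
    _ ≤ Real.exp (|u| + m) := Real.pow_div_factorial_le_exp _ (by positivity) m

lemma div_natCast_le_self {x : ℝ} (hx : 0 ≤ x) (n : ℕ) : x / n ≤ x := by
  rcases n.eq_zero_or_pos with rfl | hn
  · simpa using hx
  · exact div_le_self hx (by exact_mod_cast hn)

lemma abs_alphaC_le (b N r k : ℕ) :
    |alphaC b N r k| ≤ (k + 1) * Real.exp k * (Real.exp 2 / 2 ^ b) ^ r := by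
  have one_le : (1 : ℝ) ≤ (k + 1) * Real.exp k :=
    one_le_mul_of_one_le_of_one_le (by simp) (Real.one_le_exp (by positivity))
  rcases r with _ | m
  · simpa [alphaC] using one_le
  set u : ℝ := ((k : ℝ) + (m + 1 : ℕ)) / N - 1
  have hu : |u| + m ≤ k + 2 * (m + 1) := by
    have hdiv := div_natCast_le_self (x := (k : ℝ) + (m + 1 : ℕ)) (by positivity) N
    have habs : |u| ≤ ((k : ℝ) + (m + 1 : ℕ)) / N + 1 :=
      (abs_sub _ _).trans (by rw [abs_of_nonneg (by positivity), abs_one])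
    push_cast at hdiv habs
    linarith
  have hcoef : |(k : ℝ) / ((m + 1 : ℕ) * N)| ≤ k := by
    rw [← Nat.cast_mul, abs_of_nonneg (by positivity)]
    exact div_natCast_le_self (by positivity) _
  have hc : |(-(2 : ℝ) ^ (-(b : ℤ)))| = 1 / 2 ^ b := by
    rw [abs_neg, abs_of_pos (by positivity), zpow_neg, zpow_natCast, one_div]
  have hexp : Real.exp (2 * (m + 1)) = Real.exp 2 ^ (m + 1) := by
    rw [← Real.exp_nat_mul]; push_cast; ring_nf
  simp only [alphaC, Nat.succ_ne_zero, if_false, Nat.add_sub_cancel, abs_mul, abs_pow, hc]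
  calc |(k : ℝ) / ((m + 1 : ℕ) * N)| * |gbc u m| * (1 / 2 ^ b) ^ (m + 1)
      ≤ k * Real.exp (k + 2 * (m + 1)) * (1 / 2 ^ b) ^ (m + 1) := by
        gcongr
        exact (abs_gbc_le_exp u m).trans (Real.exp_le_exp.mpr hu)
    _ = k * Real.exp k * (Real.exp 2 / 2 ^ b) ^ (m + 1) := by
        rw [Real.exp_add, hexp, div_eq_mul_one_div (Real.exp 2), mul_pow]; ring
    _ ≤ (k + 1) * Real.exp k * (Real.exp 2 / 2 ^ b) ^ (m + 1) := by gcongr; linarith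

lemma summable_norm_alphaC_mul_pow {b : ℕ} (hb : 4 ≤ b) (N k : ℕ) {z : ℂ} (hz : ‖z‖ < 2) :
    Summable fun r ↦ ‖(alphaC b N r k : ℂ) * z ^ r‖ := by
  have hρ : Real.exp 2 / 2 ^ b * ‖z‖ < 1 := by
    have he : Real.exp 2 < 8 := by
      rw [show (2 : ℝ) = 1 + 1 by norm_num, Real.exp_add]
      nlinarith [Real.exp_one_lt_d9, Real.exp_pos 1]
    have h16 : (16 : ℝ) ≤ 2 ^ b := by
      calc (16 : ℝ) = 2 ^ 4 := by norm_num
        _ ≤ 2 ^ b := pow_le_pow_right₀ (by norm_num) hb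
    calc Real.exp 2 / 2 ^ b * ‖z‖ ≤ Real.exp 2 / 16 * 2 := by gcongr
      _ < 1 := by linarith
  refine Summable.of_nonneg_of_le (fun r ↦ norm_nonneg _) (fun r ↦ ?_)
    ((summable_geometric_of_lt_one (by positivity) hρ).mul_left ((k + 1) * Real.exp k))
  rw [norm_mul, norm_pow, Complex.norm_real, Real.norm_eq_abs, mul_pow, ← mul_assoc]
  gcongr
  exact abs_alphaC_le b N r k

theorem hasSum_sum_antidiagonal_of_summable_norm {R : Type*} [NormedRing R] [CompleteSpace R]
    {f g : ℕ → R} (hf : Summable fun n ↦ ‖f n‖) (hg : Summable fun n ↦ ‖g n‖) :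
    HasSum (fun n ↦ ∑ p ∈ antidiagonal n, f p.1 * g p.2) ((∑' n, f n) * ∑' n, g n) := by
  rw [tsum_mul_tsum_eq_tsum_sum_antidiagonal_of_summable_norm hf hg]
  exact (summable_norm_sum_mul_antidiagonal_of_summable_norm hf hg).of_norm.hasSum

theorem hasSum_alphaC_mul_pow {b : ℕ} (hb : 4 ≤ b) (N : ℕ) {z : ℂ} (hz : ‖z‖ < 2) (k : ℕ) :
    HasSum (fun r ↦ (alphaC b N r k : ℂ) * z ^ r) ((∑' r, (alphaC b N r 1 : ℂ) * z ^ r) ^ k) := by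
  induction k with
  | zero =>
    simp only [alphaC_zero_right, pow_zero]
    convert hasSum_ite_eq 0 (1 : ℂ) using 2 with r
    split_ifs with h <;> simp [h]
  | succ k ih =>
    have hconv (n : ℕ) : ∑ p ∈ antidiagonal n,
        (alphaC b N p.1 k : ℂ) * z ^ p.1 * ((alphaC b N p.2 1 : ℂ) * z ^ p.2) =
        (alphaC b N n (k + 1) : ℂ) * z ^ n := by
      rw [← sum_antidiagonal_alphaC_mul, Complex.ofReal_sum, sum_mul]
      refine sum_congr rfl fun p hp ↦ ?_
      rw [← mem_antidiagonal.mp hp, pow_add]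
      push_cast
      ring
    rw [pow_succ, ← ih.tsum_eq]
    simpa only [hconv] using hasSum_sum_antidiagonal_of_summable_norm
      (summable_norm_alphaC_mul_pow hb N k hz) (summable_norm_alphaC_mul_pow hb N 1 hz)

theorem alpha_power_series_general (b N : ℕ) (hb : 4 ≤ b) (k : ℕ)
    (z : ℂ) (hz : ‖z‖ < 2) :
    Summable (fun r : ℕ => (alphaC b N r 1 : ℂ) * z ^ (r + 1)) ∧
    HasSum (fun r : ℕ => (alphaC b N r k : ℂ) * z ^ (k + r))
      ((∑' r : ℕ, (alphaC b N r 1 : ℂ) * z ^ (r + 1)) ^ k) := by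
  have shift (j : ℕ) (r : ℕ) :
      (alphaC b N r j : ℂ) * z ^ (j + r) = z ^ j * ((alphaC b N r j : ℂ) * z ^ r) := by
    rw [pow_add]; ring
  have hα : HasSum (fun r ↦ (alphaC b N r 1 : ℂ) * z ^ (r + 1))
      (z * ∑' r, (alphaC b N r 1 : ℂ) * z ^ r) := by
    simpa only [add_comm _ 1, shift, pow_one] using (hasSum_alphaC_mul_pow hb N hz 1).mul_left z
  refine ⟨hα.summable, ?_⟩
  rw [hα.tsum_eq, mul_pow]
  simpa only [shift] using (hasSum_alphaC_mul_pow hb N hz k).mul_left (z ^ k)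

/-- for `k ≥ 0` and `|z| < 2` the series `α(z) = ∑ α_{r,1} z^(r+1)`
converges, and `α(z)^k = ∑ α_{r,k} z^(k+r)`, the latter series also converging. -/
theorem alpha_power_series (b N : ℕ) (hb : 4 ≤ b) (hN : 3 ≤ N) (k : ℕ)
    (z : ℂ) (hz : ‖z‖ < 2) :
    Summable (fun r : ℕ => (alphaC b N r 1 : ℂ) * z ^ (r + 1)) ∧
    HasSum (fun r : ℕ => (alphaC b N r k : ℂ) * z ^ (k + r))
      ((∑' r : ℕ, (alphaC b N r 1 : ℂ) * z ^ (r + 1)) ^ k) :=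
  alpha_power_series_general b N hb k z hz
end

section
/- Let W(X) be a polynomial with integer coefficients of degree at most 2N, regarded as a polynomial over ℝ, and let H(X) be the remainder on dividing (1 − 2^{−b} X)·W(X) by B(X) = X^{N+1} − 2^b X^N + 2^b (so deg H < N+1). Then every coefficient of 2^b·H(X) is an integer, and |W(2^b) − 2^{Nb}·H(2^b)| ≤ 2^{(N−1)b+1} · max(|W_0|, …, |W_{N−1}|), where W_i denotes the coefficient of X^i in W. -/
/-!
Write `t = 2^b` and split `W = L + X^N Q` with `L = W %ₘ X^N` (degree `< N`) and
`Q = W /ₘ X^N` (degree `≤ N`). Since `(1 - X/t) X^N = -(B - t)/t`, we get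
`(1 - X/t) W ≡ (1 - X/t) L + Q (mod B)`, and the right-hand side has degree `≤ N`, so it is `H`.
Hence `t H = (t - X) L + t Q` has integer coefficients, and at `X = t` the factor `1 - X/t`
vanishes, so `W(t) - t^N H(t) = L(t)`, whose absolute value is at most
`max |W_i| · ∑_{i<N} t^i ≤ 2 t^(N-1) max |W_i|`.
-/

open Polynomial Finset

theorem geom_sum_le_two_mul_pow {R : Type*} [CommSemiring R] [PartialOrder R]
    [IsOrderedRing R] {x : R} (hx : 2 ≤ x) (n : ℕ) :
    ∑ i ∈ range (n + 1), x ^ i ≤ 2 * x ^ n := by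
  induction n with
  | zero => simp [one_le_two]
  | succ n ih =>
    have hxn : 2 * x ^ n ≤ x ^ (n + 1) := by
      rw [pow_succ']
      exact mul_le_mul_of_nonneg_right hx (pow_nonneg (zero_le_two.trans hx) n)
    calc ∑ i ∈ range (n + 1 + 1), x ^ i = ∑ i ∈ range (n + 1), x ^ i + x ^ (n + 1) :=
          sum_range_succ _ _
      _ ≤ x ^ (n + 1) + x ^ (n + 1) := add_le_add_left (ih.trans hxn) _
      _ = 2 * x ^ (n + 1) := (two_mul _).symm

theorem abs_eval_le_two_mul_pow_mul {R : Type*} [CommRing R] [LinearOrder R]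
    [IsStrictOrderedRing R] {p : R[X]} {n : ℕ} {x M : R} (hp : p.natDegree ≤ n) (hx : 2 ≤ x)
    (hM : ∀ i ≤ n, |p.coeff i| ≤ M) :
    |p.eval x| ≤ 2 * x ^ n * M := by
  have hx0 : 0 ≤ x := zero_le_two.trans hx
  have hM0 : 0 ≤ M := (abs_nonneg _).trans (hM 0 n.zero_le)
  rw [eval_eq_sum_range' (Nat.lt_succ_of_le hp)]
  calc |∑ i ∈ range (n + 1), p.coeff i * x ^ i|
      ≤ ∑ i ∈ range (n + 1), |p.coeff i| * x ^ i := by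
        refine (abs_sum_le_sum_abs _ _).trans (sum_le_sum fun i _ => ?_)
        rw [abs_mul, abs_of_nonneg (pow_nonneg hx0 i)]
    _ ≤ ∑ i ∈ range (n + 1), M * x ^ i := sum_le_sum fun i hi =>
        mul_le_mul_of_nonneg_right (hM i (Nat.lt_succ_iff.mp (mem_range.mp hi)))
          (pow_nonneg hx0 i)
    _ ≤ 2 * x ^ n * M := by
        rw [← mul_sum, mul_comm]
        exact mul_le_mul_of_nonneg_right (geom_sum_le_two_mul_pow hx n) hM0

section CommRing

variable {R : Type*} [CommRing R]

theorem coeff_modByMonic_X_pow_of_lt (p : R[X]) {n i : ℕ} (hi : i < n) :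
    (p %ₘ X ^ n).coeff i = p.coeff i := by
  conv_rhs => rw [← modByMonic_add_div p (X ^ n)]
  rw [coeff_add, coeff_X_pow_mul', if_neg (not_le.mpr hi), add_zero]

theorem natDegree_modByMonic_X_pow_succ_le [Nontrivial R] (p : R[X]) (n : ℕ) :
    (p %ₘ X ^ (n + 1)).natDegree ≤ n := by
  have hX : (X ^ (n + 1) : R[X]) ≠ 1 := fun h => by simpa using congrArg natDegree h
  simpa [Nat.lt_succ_iff] using natDegree_modByMonic_lt p (monic_X_pow (n + 1)) hX

theorem modByMonic_eq_one_sub_C_mul_X_mul_add [Nontrivial R] {c t : R} (hct : c * t = 1)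
    {N : ℕ} {P : R[X]} (hP : P.natDegree ≤ 2 * N) :
    ((1 - C c * X) * P) %ₘ (X ^ (N + 1) - C t * X ^ N + C t) =
      (1 - C c * X) * (P %ₘ X ^ N) + P /ₘ X ^ N := by
  have hB : X ^ (N + 1) - C t * X ^ N + C t = X ^ (N + 1) + (C t - C t * X ^ N) := by ring
  have hlow : (C t - C t * X ^ N).degree < ↑(N + 1) := by
    compute_degree!
    exact WithBot.coe_lt_coe.mpr N.lt_succ_self
  have hBmonic : (X ^ (N + 1) - C t * X ^ N + C t).Monic := hB ▸ monic_X_pow_add hlow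
  have hBdeg : (X ^ (N + 1) - C t * X ^ N + C t).degree = ↑(N + 1) := by
    rw [hB, degree_add_eq_left_of_degree_lt] <;> rw [degree_X_pow]; exact hlow
  refine (div_modByMonic_unique (-(C c * (P /ₘ X ^ N))) _ hBmonic ⟨?_, ?_⟩).2
  · have hct' : C c * C t = (1 : R[X]) := by rw [← C_mul, hct, C_1]
    conv_rhs => rw [← modByMonic_add_div P (X ^ N)]
    linear_combination (P /ₘ X ^ N * (X ^ N - 1)) * hct'
  · rw [hBdeg]
    have hQ : (P /ₘ X ^ N).natDegree ≤ N := by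
      rw [natDegree_divByMonic _ (monic_X_pow N), natDegree_X_pow]; omega
    have hL : ((1 - C c * X) * (P %ₘ X ^ N)).degree < ↑(N + 1) :=
      calc _ ≤ (1 - C c * X).degree + (P %ₘ X ^ N).degree := degree_mul_le _ _
        _ ≤ 1 + (P %ₘ X ^ N).degree := by gcongr; compute_degree
        _ < 1 + ↑N := WithBot.add_lt_add_left WithBot.one_ne_bot
          ((degree_modByMonic_lt _ (monic_X_pow N)).trans_eq (degree_X_pow N))
        _ = ↑(N + 1) := by norm_cast; omega
    refine (degree_add_le _ _).trans_lt (max_lt hL ?_)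
    exact (degree_le_of_natDegree_le hQ).trans_lt (WithBot.coe_lt_coe.mpr N.lt_succ_self)

theorem eval_sub_pow_mul_eval_one_sub_C_mul_X_mul_add {c x : R} (hcx : c * x = 1) (N : ℕ)
    (P : R[X]) :
    P.eval x - x ^ N * ((1 - C c * X) * (P %ₘ X ^ N) + P /ₘ X ^ N).eval x =
      (P %ₘ X ^ N).eval x := by
  have hsplit := congrArg (eval x) (modByMonic_add_div P (X ^ N))
  simp only [eval_add, eval_mul, eval_pow, eval_X] at hsplit
  simp only [eval_add, eval_mul, eval_sub, eval_one, eval_C, eval_X]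
  linear_combination -hsplit + (x ^ N * (P %ₘ X ^ N).eval x) * hcx

end CommRing

/-- cancellation trick for the high product.
`B(X) = X^(N+1) - 2^b X^N + 2^b`, `H` is the remainder of `(1 - 2^(-b) X) W(X)`
modulo `B`. Then all coefficients of `2^b H` are integers, and
`|W(2^b) - 2^(Nb) H(2^b)| ≤ 2^((N-1)b+1) max_{i<N} |W_i|`. -/
theorem high_product_cancellation (b N : ℕ) (hb : 4 ≤ b) (hN : 3 ≤ N)
    (W : Polynomial ℤ) (hW : W.natDegree ≤ 2 * N)
    (H : Polynomial ℝ)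
    (hH : H = ((1 - C ((2:ℝ) ^ (-(b:ℤ))) * X) * W.map (Int.castRingHom ℝ)) %ₘ
        (X ^ (N + 1) - C ((2:ℝ) ^ b) * X ^ N + C ((2:ℝ) ^ b))) :
    (∀ i : ℕ, ∃ m : ℤ, (2:ℝ) ^ b * H.coeff i = (m : ℝ)) ∧
    |((W.eval (2 ^ b) : ℤ) : ℝ) - (2:ℝ) ^ (N * b) * H.eval ((2:ℝ) ^ b)| ≤
      (2:ℝ) ^ ((N - 1) * b + 1) *
        (Finset.range N).sup' (Finset.nonempty_range_iff.mpr (by omega))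
          (fun i => |(W.coeff i : ℝ)|) := by
  set c : ℝ := 2 ^ (-(b : ℤ))
  have hct : c * 2 ^ b = 1 := by simp [c, zpow_neg]
  set P := W.map (Int.castRingHom ℝ) with hPdef
  have hHP : H = (1 - C c * X) * (P %ₘ X ^ N) + P /ₘ X ^ N :=
    hH.trans (modByMonic_eq_one_sub_C_mul_X_mul_add hct (natDegree_map_le.trans hW))
  have h2bH : C (2 ^ b) * H =
      ((2 ^ b - X) * (W %ₘ X ^ N) + 2 ^ b * (W /ₘ X ^ N)).map (Int.castRingHom ℝ) := by
    have hct' : (2 : ℝ[X]) ^ b * C c = 1 := by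
      rw [← C_ofNat, ← C_pow, ← C_mul, mul_comm, hct, C_1]
    simp only [hHP, Polynomial.map_add, Polynomial.map_mul, Polynomial.map_sub, map_X,
      map_modByMonic _ (monic_X_pow N), map_divByMonic _ (monic_X_pow N), Polynomial.map_pow,
      Polynomial.map_ofNat, C_pow, C_ofNat]
    linear_combination (-(X * (P %ₘ X ^ N))) * hct'
  refine ⟨fun i => ⟨_, by rw [← coeff_C_mul, h2bH, coeff_map, eq_intCast]⟩, ?_⟩
  obtain ⟨n, rfl⟩ : ∃ n, N = n + 1 := ⟨N - 1, by omega⟩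
  have hWP : ((W.eval (2 ^ b) : ℤ) : ℝ) = P.eval (2 ^ b) := by
    simpa using (eval_intCast_map (Int.castRingHom ℝ) W (2 ^ b)).symm
  have hcoeff : ∀ i ≤ n, |(P %ₘ X ^ (n + 1)).coeff i| ≤
      (range (n + 1)).sup' (nonempty_range_iff.mpr (by omega)) (fun i => |(W.coeff i : ℝ)|) := by
    intro i hi
    rw [coeff_modByMonic_X_pow_of_lt P (Nat.lt_succ_of_le hi), hPdef, coeff_map, eq_intCast]
    exact le_sup' (fun i => |(W.coeff i : ℝ)|) (mem_range.mpr (Nat.lt_succ_of_le hi))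
  rw [hWP, hHP, pow_mul', eval_sub_pow_mul_eval_one_sub_C_mul_X_mul_add hct, Nat.add_sub_cancel,
    pow_succ (2 : ℝ) (n * b), pow_mul', mul_comm _ (2 : ℝ)]
  exact abs_eval_le_two_mul_pow_mul (natDegree_modByMonic_X_pow_succ_le P n)
    (le_self_pow₀ one_le_two (by omega)) hcoeff
end

section
/- The polynomial B(X) = X^{N+1} − 2^b X^N + 2^b has a unique real root ρ in the open interval (2^b·(1 − 2^{−Nb+1}), 2^b), and this root satisfies 0.998 < ρ^N / 2^{Nb} < 1. -/
/-!
Write `c = 2^b` and `ε = 2^(1-Nb) = 2 / c^N`, so the interval is `(c(1-ε), c)`. Since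
`B(x) = x^N (x - c) + c`, we get `B(c) = c > 0` and `B(c(1-ε)) = c(1 - 2(1-ε)^N) < 0`, the latter
by Bernoulli's inequality `(1-ε)^N ≥ 1 - Nε` and `Nε < 1/2`. As `B'(x) = x^(N-1)((N+1)x - Nc)`,
`B` is strictly increasing on `[Nc/(N+1), ∞) ⊇ [c(1-ε), c]`, which gives existence and uniqueness.
Finally `(1-ε)^N < ρ^N / c^N < 1`, and `(1-ε)^N ≥ 1 - Nε > 0.998` because `1000 N < 2^(Nb)`.
-/

open Set

theorem exists_unique_zero_Ioo_of_strictMonoOn {f : ℝ → ℝ} {a b : ℝ} (hab : a ≤ b)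
    (hf : ContinuousOn f (Icc a b)) (hmono : StrictMonoOn f (Icc a b))
    (ha : f a < 0) (hb : 0 < f b) :
    ∃ ρ ∈ Ioo a b, f ρ = 0 ∧ ∀ ρ' ∈ Ioo a b, f ρ' = 0 → ρ' = ρ := by
  obtain ⟨ρ, hρ, hρ0⟩ := intermediate_value_Ioo hab hf ⟨ha, hb⟩
  exact ⟨ρ, hρ, hρ0, fun ρ' hρ' hρ'0 =>
    hmono.injOn (Ioo_subset_Icc_self hρ') (Ioo_subset_Icc_self hρ) (hρ'0.trans hρ0.symm)⟩

theorem strictMonoOn_pow_succ_sub_mul_pow_add (N : ℕ) {c : ℝ} (hc : 0 ≤ c) (d : ℝ) :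
    StrictMonoOn (fun x : ℝ => x ^ (N + 1) - c * x ^ N + d) (Ici (N * c / (N + 1))) := by
  refine strictMonoOn_of_deriv_pos (convex_Ici _) (by fun_prop) fun x hx => ?_
  rw [interior_Ici, mem_Ioi, div_lt_iff₀ (by positivity)] at hx
  have hx0 : 0 < x := by nlinarith
  have hderiv : HasDerivAt (fun x : ℝ => x ^ (N + 1) - c * x ^ N + d)
      ((N + 1 : ℕ) * x ^ N - c * (N * x ^ (N - 1))) x :=
    (((hasDerivAt_pow (N + 1) x).sub ((hasDerivAt_pow N x).const_mul c)).add_const d)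
  rw [hderiv.deriv]
  -- multiplying by `x > 0` removes the `x ^ (N - 1)`, which is junk when `N = 0`
  have hmul : x * (N * x ^ (N - 1)) = N * x ^ N := by
    rcases N with _ | N
    · simp
    · simp only [Nat.add_sub_cancel, pow_succ]; ring
  have hpos : 0 < x * ((N + 1 : ℕ) * x ^ N - c * (N * x ^ (N - 1))) := by
    rw [mul_sub, mul_left_comm x c, hmul]
    push_cast
    nlinarith [pow_pos hx0 N]
  exact pos_of_mul_pos_right hpos hx0.le

theorem one_thousand_mul_lt_two_pow_mul {b N : ℕ} (hb : 4 ≤ b) (hN : 3 ≤ N) :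
    1000 * N < 2 ^ (N * b) := by
  have h16 : 1000 * N < 16 ^ N := by
    induction N, hN using Nat.le_induction with
    | base => norm_num
    | succ n _ ih => rw [pow_succ]; omega
  calc 1000 * N < 16 ^ N := h16
    _ = 2 ^ (N * 4) := by rw [pow_mul', show (2 : ℕ) ^ 4 = 16 by norm_num]
    _ ≤ 2 ^ (N * b) := Nat.pow_le_pow_right two_pos (Nat.mul_le_mul_left N hb)

theorem one_sub_mul_le_one_sub_pow {ε : ℝ} (hε : ε ≤ 2) (N : ℕ) : 1 - N * ε ≤ (1 - ε) ^ N := by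
  simpa only [mul_neg, ← sub_eq_add_neg] using one_add_mul_le_pow (neg_le_neg hε) N

theorem pow_succ_sub_mul_pow_add_self_one_sub_neg {N : ℕ} {c ε : ℝ} (hc : 0 < c)
    (hεc : ε * c ^ N = 2) (hNε : 2 * N * ε < 1) (hε : ε ≤ 2) :
    (c * (1 - ε)) ^ (N + 1) - c * (c * (1 - ε)) ^ N + c < 0 := by
  have hbernoulli := one_sub_mul_le_one_sub_pow hε N
  have heval : (c * (1 - ε)) ^ (N + 1) - c * (c * (1 - ε)) ^ N + c
      = c * (1 - 2 * (1 - ε) ^ N) := by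
    rw [← hεc, pow_succ, mul_pow]; ring
  rw [heval]
  exact mul_neg_of_pos_of_neg hc (by linarith)

theorem pow_div_pow_mem_Ioo {N : ℕ} (hN : N ≠ 0) {a c ρ : ℝ} (hc : 0 < c) (ha : 0 ≤ a)
    (hρ : ρ ∈ Ioo (c * a) c) : ρ ^ N / c ^ N ∈ Ioo (a ^ N) 1 := by
  have hρc : ρ / c ∈ Ioo a 1 :=
    ⟨(lt_div_iff₀ hc).2 (by linarith [hρ.1]), (div_lt_one hc).2 hρ.2⟩
  rw [← div_pow]
  exact ⟨pow_lt_pow_left₀ hρc.1 ha hN, pow_lt_one₀ (ha.trans hρc.1.le) hρc.2 hN⟩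

/-- `B(X) = X^(N+1) - 2^b X^N + 2^b` has a unique real root `ρ` in the
open interval `(2^b (1 - 2^(-Nb+1)), 2^b)`, and this root satisfies
`0.998 < ρ^N / 2^(Nb) < 1`. -/
theorem B_unique_real_root (b N : ℕ) (hb : 4 ≤ b) (hN : 3 ≤ N) :
    ∃ ρ : ℝ,
      (ρ ∈ Set.Ioo ((2:ℝ) ^ b * (1 - (2:ℝ) ^ (1 - (N * b : ℤ)))) ((2:ℝ) ^ b) ∧
        ρ ^ (N + 1) - 2 ^ b * ρ ^ N + 2 ^ b = 0) ∧
      (∀ ρ' : ℝ,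
        ρ' ∈ Set.Ioo ((2:ℝ) ^ b * (1 - (2:ℝ) ^ (1 - (N * b : ℤ)))) ((2:ℝ) ^ b) →
        ρ' ^ (N + 1) - 2 ^ b * ρ' ^ N + 2 ^ b = 0 → ρ' = ρ) ∧
      0.998 < ρ ^ N / 2 ^ (N * b) ∧ ρ ^ N / 2 ^ (N * b) < 1 := by
  have hε : (2:ℝ) ^ (1 - (N * b : ℤ)) = 2 / 2 ^ (N * b) := by
    rw [zpow_sub₀ two_ne_zero, zpow_one, ← Nat.cast_mul, zpow_natCast]
  rw [hε, pow_mul']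
  set c : ℝ := 2 ^ b
  set ε : ℝ := 2 / c ^ N
  have hc : 0 < c := by positivity
  have hεc : ε * c ^ N = 2 := div_mul_cancel₀ _ (by positivity)
  have hε0 : 0 < ε := by positivity
  have hN3 : (3 : ℝ) ≤ N := by exact_mod_cast hN
  have hNε : N * ε < 0.002 := by
    have h : (1000 * N : ℝ) < c ^ N := by
      rw [← pow_mul']; exact_mod_cast one_thousand_mul_lt_two_pow_mul hb hN
    nlinarith [mul_lt_mul_of_pos_left h hε0]
  have h3ε : 3 * ε ≤ N * ε := mul_le_mul_of_nonneg_right hN3 hε0.le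
  have hLc : c * (1 - ε) ≤ c := mul_le_of_le_one_right hc.le (by linarith)
  have hL : N * c / (N + 1) ≤ c * (1 - ε) := by
    rw [div_le_iff₀ (by positivity)]
    nlinarith [mul_le_mul_of_nonneg_left (show (N + 1) * ε ≤ 1 by linarith) hc.le]
  have hmono := (strictMonoOn_pow_succ_sub_mul_pow_add N hc.le c).mono
    ((Icc_subset_Ici_iff hLc).2 hL)
  have hfc : c ^ (N + 1) - c * c ^ N + c = c := by ring
  obtain ⟨ρ, hρ, hroot, huniq⟩ := exists_unique_zero_Ioo_of_strictMonoOn hLc (by fun_prop) hmono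
    (pow_succ_sub_mul_pow_add_self_one_sub_neg hc hεc (by linarith) (by linarith))
    (by linarith)
  have hbounds := pow_div_pow_mem_Ioo (N := N) (by omega) hc (by linarith) hρ
  have hbernoulli := one_sub_mul_le_one_sub_pow (show ε ≤ 2 by linarith) N
  exact ⟨ρ, ⟨hρ, hroot⟩, huniq, by linarith [hbounds.1], hbounds.2⟩
end

section
/- Every complex root of B(X) = X^{N+1} − 2^b X^N + 2^b is simple (B has no common complex root with its derivative B'), and every complex root of B other than ρ satisfies |z| < 2, where ρ denotes the unique real root of B in the interval (2^b·(1 − 2^{−Nb+1}), 2^b). Consequently B has exactly N+1 distinct complex roots. -/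
/-!
Write `T = 2 ^ b`. A root `z` of `B` satisfies `z ^ N * (z - T) = -T`, so if `‖z‖ ≥ 2` then
`‖z - T‖ = T / ‖z‖ ^ N ≤ T / 2`: every such root lies in the annulus `T / 2 ≤ ‖z‖ ≤ 2 T` and is a
fixed point of `z ↦ T - T / z ^ N`, which is a contraction there since `T ≥ 16`. Hence `ρ` is the
only root of modulus at least `2`. A double root would satisfy `z ^ N = N + 1` (from
`z B' - (N + 1) B = T (z ^ N - (N + 1))`) and `z = T N / (N + 1)`, which is far too large for
that. The count of roots is then the degree `N + 1`.
-/

open Polynomial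

theorem norm_pow_sub_pow_le {R : Type*} [NormedCommRing R] [NormOneClass R] {x y : R} {M : ℝ}
    (hx : ‖x‖ ≤ M) (hy : ‖y‖ ≤ M) (n : ℕ) :
    ‖x ^ n - y ^ n‖ ≤ n * M ^ (n - 1) * ‖x - y‖ := by
  have hM : 0 ≤ M := (norm_nonneg x).trans hx
  rw [← geom_sum₂_mul]
  refine (norm_mul_le _ _).trans (mul_le_mul_of_nonneg_right ?_ (norm_nonneg _))
  calc ‖∑ i ∈ Finset.range n, x ^ i * y ^ (n - 1 - i)‖
      ≤ ∑ i ∈ Finset.range n, ‖x ^ i * y ^ (n - 1 - i)‖ := norm_sum_le _ _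
    _ ≤ ∑ i ∈ Finset.range n, M ^ (n - 1) := by
      refine Finset.sum_le_sum fun i hi => ?_
      have hi : i + (n - 1 - i) = n - 1 := by grind
      calc ‖x ^ i * y ^ (n - 1 - i)‖ ≤ ‖x‖ ^ i * ‖y‖ ^ (n - 1 - i) :=
            (norm_mul_le _ _).trans (mul_le_mul (norm_pow_le _ _) (norm_pow_le _ _)
              (norm_nonneg _) (by positivity))
        _ ≤ M ^ i * M ^ (n - 1 - i) := by gcongr
        _ = M ^ (n - 1) := by rw [← pow_add, hi]
    _ = n * M ^ (n - 1) := by simp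

theorem Polynomial.card_roots_toFinset_eq_natDegree {k : Type*} [Field k] [IsAlgClosed k]
    [DecidableEq k] {p : k[X]} (h : ∀ z, p.IsRoot z → ¬ p.derivative.IsRoot z) :
    p.roots.toFinset.card = p.natDegree := by
  have hp : p ≠ 0 := fun hp => h 0 (by simp [hp]) (by simp [hp])
  have hnodup : p.roots.Nodup := by
    refine Multiset.nodup_iff_count_le_one.mpr fun z => ?_
    rw [count_roots]
    by_contra! hz
    exact h z ((one_lt_rootMultiplicity_iff_isRoot hp).mp hz).1
      ((one_lt_rootMultiplicity_iff_isRoot hp).mp hz).2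
  rw [Multiset.toFinset_card_of_nodup hnodup, IsAlgClosed.card_roots_eq_natDegree]

theorem natCast_mul_mul_two_mul_pow_lt {T : ℝ} (hT : 16 ≤ T) (n : ℕ) :
    (n + 1 : ℕ) * T * (2 * T) ^ n < (T / 2) ^ (n + 1) * (T / 2) ^ (n + 1) := by
  have hn : ((n + 1 : ℕ) : ℝ) < 2 ^ (n + 1) := by exact_mod_cast Nat.lt_two_pow_self
  have hsq : 4 * T ≤ T ^ 2 / 4 := by nlinarith
  calc (n + 1 : ℕ) * T * (2 * T) ^ n < 2 ^ (n + 1) * T * (2 * T) ^ n := by gcongr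
    _ = 2 * T * (2 ^ n * (2 * T) ^ n) := by ring
    _ ≤ 4 * T * (2 ^ n * (2 * T) ^ n) := by gcongr; norm_num
    _ = 4 * T * (4 * T) ^ n := by rw [← mul_pow]; ring
    _ ≤ T ^ 2 / 4 * (T ^ 2 / 4) ^ n := by gcongr
    _ = (T / 2) ^ (n + 1) * (T / 2) ^ (n + 1) := by rw [← mul_pow, ← pow_succ']; ring

/-- The polynomial `B` of the statement, with `T = 2 ^ b`. -/
noncomputable def polyB (N : ℕ) (T : ℂ) : ℂ[X] := X ^ (N + 1) - C T * X ^ N + C T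

namespace polyB

section

variable {N : ℕ} {T z : ℂ}

theorem eval_eq : (polyB N T).eval z = z ^ N * (z - T) + T := by
  simp only [polyB, eval_add, eval_sub, eval_pow, eval_X, eval_mul, eval_C]
  ring

theorem natDegree_eq : (polyB N T).natDegree = N + 1 := by
  unfold polyB; compute_degree!

theorem mul_eval_derivative :
    z * (polyB N T).derivative.eval z = (N + 1) * (polyB N T).eval z + T * (z ^ N - (N + 1)) := by
  cases N with
  | zero => simp [polyB]
  | succ n =>
    simp only [polyB, derivative_sub, derivative_X_pow_succ, Nat.cast_add,
      Nat.cast_one, map_add, map_natCast, map_one, derivative_mul, derivative_C, zero_mul, zero_add,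
      add_zero, eval_sub, eval_mul, eval_add, eval_natCast, eval_one, eval_pow, eval_X, eval_C]
    ring

end

section

variable {N : ℕ} {T : ℝ} {z z₁ z₂ : ℂ}

theorem pow_mul_sub_eq_neg_of_isRoot (hz : (polyB N T).IsRoot z) : z ^ N * (z - T) = -T := by
  rw [IsRoot, eval_eq] at hz
  linear_combination hz

theorem norm_pow_mul_norm_sub_of_isRoot (hT : 0 ≤ T) (hz : (polyB N T).IsRoot z) :
    ‖z‖ ^ N * ‖z - T‖ = T := by
  simpa [abs_of_nonneg hT] using congrArg norm (pow_mul_sub_eq_neg_of_isRoot hz)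

theorem norm_sub_le_half_of_isRoot (hT : 0 ≤ T) (hN : 1 ≤ N) (hz : (polyB N T).IsRoot z)
    (h2 : 2 ≤ ‖z‖) : ‖z - T‖ ≤ T / 2 := by
  have h2N : 2 ≤ ‖z‖ ^ N :=
    calc (2 : ℝ) = 2 ^ 1 := by norm_num
      _ ≤ 2 ^ N := pow_le_pow_right₀ (by norm_num) hN
      _ ≤ ‖z‖ ^ N := by gcongr
  nlinarith [norm_pow_mul_norm_sub_of_isRoot hT hz, norm_nonneg (z - T)]

theorem norm_mem_Icc_of_isRoot (hT : 0 ≤ T) (hN : 1 ≤ N) (hz : (polyB N T).IsRoot z)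
    (h2 : 2 ≤ ‖z‖) : ‖z‖ ∈ Set.Icc (T / 2) (2 * T) := by
  have h := (abs_norm_sub_norm_le z T).trans (norm_sub_le_half_of_isRoot hT hN hz h2)
  rw [Complex.norm_real, Real.norm_of_nonneg hT, abs_le] at h
  constructor <;> linarith

theorem eq_of_isRoot_of_two_le_norm (hT : 16 ≤ T) (hN : 1 ≤ N)
    (hz₁ : (polyB N T).IsRoot z₁) (hz₂ : (polyB N T).IsRoot z₂)
    (h₁ : 2 ≤ ‖z₁‖) (h₂ : 2 ≤ ‖z₂‖) : z₁ = z₂ := by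
  obtain ⟨n, rfl⟩ : ∃ n, N = n + 1 := ⟨N - 1, by omega⟩
  have hT0 : 0 ≤ T := by linarith
  obtain ⟨hlo₁, hhi₁⟩ := norm_mem_Icc_of_isRoot hT0 hN hz₁ h₁
  obtain ⟨hlo₂, hhi₂⟩ := norm_mem_Icc_of_isRoot hT0 hN hz₂ h₂
  by_contra hne
  have hpos : 0 < ‖z₁ - z₂‖ := norm_pos_iff.mpr (sub_ne_zero.mpr hne)
  -- both roots are fixed points of `z ↦ T - T / z ^ N`
  have hfix : (z₁ - z₂) * (z₁ ^ (n + 1) * z₂ ^ (n + 1)) = T * (z₁ ^ (n + 1) - z₂ ^ (n + 1)) := by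
    linear_combination z₂ ^ (n + 1) * pow_mul_sub_eq_neg_of_isRoot hz₁ -
      z₁ ^ (n + 1) * pow_mul_sub_eq_neg_of_isRoot hz₂
  have hnorm : ‖z₁ - z₂‖ * (‖z₁‖ ^ (n + 1) * ‖z₂‖ ^ (n + 1))
      = T * ‖z₁ ^ (n + 1) - z₂ ^ (n + 1)‖ := by
    simpa [abs_of_nonneg hT0] using congrArg norm hfix
  have hlip := norm_pow_sub_pow_le hhi₁ hhi₂ (n + 1)
  have : (T / 2) ^ (n + 1) * (T / 2) ^ (n + 1) ≤ (n + 1 : ℕ) * T * (2 * T) ^ n := by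
    refine le_of_mul_le_mul_left ?_ hpos
    calc ‖z₁ - z₂‖ * ((T / 2) ^ (n + 1) * (T / 2) ^ (n + 1))
        ≤ ‖z₁ - z₂‖ * (‖z₁‖ ^ (n + 1) * ‖z₂‖ ^ (n + 1)) := by gcongr
      _ ≤ T * ((n + 1 : ℕ) * (2 * T) ^ n * ‖z₁ - z₂‖) := by rw [hnorm]; gcongr; simpa using hlip
      _ = ‖z₁ - z₂‖ * ((n + 1 : ℕ) * T * (2 * T) ^ n) := by ring
  exact this.not_gt (natCast_mul_mul_two_mul_pow_lt hT n)

theorem not_isRoot_derivative_of_isRoot (hT : 8 ≤ T) (hN : 1 ≤ N)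
    (hz : (polyB N T).IsRoot z) : ¬ (derivative (polyB N T)).IsRoot z := by
  intro hz'
  have hT0 : (T : ℂ) ≠ 0 := by exact_mod_cast (by linarith : T ≠ 0)
  have hzN : z ^ N = N + 1 := by
    have h := mul_eval_derivative (N := N) (T := T) (z := z)
    rw [hz'.eq_zero, hz.eq_zero, mul_zero, mul_zero, zero_add, zero_eq_mul] at h
    exact sub_eq_zero.mp (h.resolve_left hT0)
  have hlin : (N + 1) * z = T * N := by
    linear_combination pow_mul_sub_eq_neg_of_isRoot hz - (z - T) * hzN
  have hnorm_succ : ‖(N + 1 : ℂ)‖ = N + 1 := by exact_mod_cast Complex.norm_natCast (N + 1)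
  have hpow : ‖z‖ ^ N = N + 1 := by rw [← norm_pow, hzN, hnorm_succ]
  have hmul : (N + 1) * ‖z‖ = T * N := by
    simpa [hnorm_succ, abs_of_nonneg (by linarith : 0 ≤ T)] using congrArg norm hlin
  have h4 : 4 ≤ ‖z‖ := by
    have : (1 : ℝ) ≤ N := by exact_mod_cast hN
    nlinarith [norm_nonneg z]
  have : (N + 1 : ℝ) < ‖z‖ ^ N :=
    calc (N + 1 : ℝ) < 2 ^ (N + 1) := by exact_mod_cast Nat.lt_two_pow_self
      _ ≤ 2 ^ (2 * N) := pow_le_pow_right₀ (by norm_num) (by omega)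
      _ = 4 ^ N := by rw [pow_mul]; norm_num
      _ ≤ ‖z‖ ^ N := by gcongr
  exact this.ne' hpow

end

end polyB

/-- every complex root of `B(X) = X^(N+1) - 2^b X^N + 2^b` is simple,
and every complex root other than the distinguished real root `ρ` satisfies `|z| < 2`.
Consequently `B` has exactly `N + 1` distinct complex roots. -/
theorem roots_of_B (b N : ℕ) (hb : 4 ≤ b) (hN : 3 ≤ N) (ρ : ℝ)
    (hρ : ρ ∈ Set.Ioo ((2:ℝ) ^ b * (1 - (2:ℝ) ^ (1 - (N * b : ℤ)))) ((2:ℝ) ^ b))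
    (hρroot : ρ ^ (N + 1) - 2 ^ b * ρ ^ N + 2 ^ b = 0)
    (B : Polynomial ℂ)
    (hB : B = X ^ (N + 1) - C ((2:ℂ) ^ b) * X ^ N + C ((2:ℂ) ^ b)) :
    (∀ z : ℂ, B.eval z = 0 → B.derivative.eval z ≠ 0) ∧
    (∀ z : ℂ, B.eval z = 0 → z ≠ (ρ : ℂ) → ‖z‖ < 2) ∧
    B.roots.toFinset.card = N + 1 := by
  set T : ℝ := 2 ^ b with hTdef
  have hT : 16 ≤ T :=
    calc (16 : ℝ) = 2 ^ 4 := by norm_num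
      _ ≤ 2 ^ b := pow_le_pow_right₀ (by norm_num) hb
  have hN1 : 1 ≤ N := by omega
  obtain rfl : B = polyB N T := by rw [hB, polyB, hTdef]; push_cast; rfl
  have hsimple (z : ℂ) := polyB.not_isRoot_derivative_of_isRoot (z := z) (by linarith : 8 ≤ T) hN1
  have hρ2 : 2 ≤ ρ := by
    have hNb : 2 ≤ (N * b : ℤ) := by norm_cast; nlinarith
    have : (2 : ℝ) ^ (1 - (N * b : ℤ)) ≤ 1 / 2 :=
      calc (2 : ℝ) ^ (1 - (N * b : ℤ)) ≤ 2 ^ (-1 : ℤ) := zpow_le_zpow_right₀ (by norm_num) (by omega)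
        _ = 1 / 2 := by norm_num
    nlinarith [hρ.1]
  have hρroot' : (polyB N T).IsRoot ρ := by
    rw [IsRoot, polyB.eval_eq]
    exact_mod_cast (by linear_combination hρroot : ρ ^ N * (ρ - T) + T = 0)
  refine ⟨hsimple, fun z hz hne => ?_, ?_⟩
  · by_contra! h
    refine hne (polyB.eq_of_isRoot_of_two_le_norm hT hN1 hz hρroot' h ?_)
    rwa [Complex.norm_real, Real.norm_of_nonneg (by linarith)]
  · rw [card_roots_toFinset_eq_natDegree hsimple, polyB.natDegree_eq]
end
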